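/- Let c = 1/4 + i·√15/4. The 9×9 complex matrix W₉, with rows and columns indexed by the finite field F₉ with nine elements, defined by (W₉)_{x,x} = 1, (W₉)_{x,y} = c if x ≠ y and x−y is a nonzero square in F₉, and (W₉)_{x,y} = conj(c) if x ≠ y and x−y is a non-square in F₉, is a complex Hadamard matrix of order 9. -/

import Mathlib

open Matrix

/-- `H` is a complex Hadamard matrix: unimodular entries and `H Hᴴ = n • I`. -/
def IsCHadamard {n : Type*} [Fintype n] [DecidableEq n] (H : Matrix n n ℂ) : Prop :=
  (∀ i j, ‖H i j‖ = 1) ∧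
    H * H.conjTranspose = (Fintype.card n : ℂ) • 1

/-!
Let `χ` be the quadratic character of `F`, `q = |F| ≡ 1 (mod 4)`, `J` the all-ones matrix and
`Q = (χ(x - y))` the Jacobsthal matrix. As `χ(-1) = 1`, `Q` is symmetric; `QJ = JQ = 0`, and
`Q² = qI - J` because for `d ≠ 0` the substitution `a = d x` turns `∑ₐ χ(a) χ(a - d)` into
`χ(-1)` times the Jacobi sum of `χ` with itself, which is `-χ(-1)`.
Writing `c = α + iτ`, the matrix is `W = αJ + (1 - α)I + iτQ`, hence for `|c| = 1`
`W Wᴴ = E J + (q - E) I` with `E = (q - 1)α² + 2α - 1`. For `q = 9` and `c = (1 + i√15)/4`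
we have `α = 1/4` and `E = 0`.
-/

section QuadraticChar

variable {F : Type*} [Field F] [Fintype F] [DecidableEq F]

theorem quadraticChar_sum_mul_sub_of_ne_zero (hF : ringChar F ≠ 2) {d : F} (hd : d ≠ 0) :
    ∑ a : F, quadraticChar F a * quadraticChar F (a - d) = -1 := by
  set χ := quadraticChar F
  have hχ_inv : χ⁻¹ = χ := (quadraticChar_isQuadratic F).inv
  have hχ_neg_one : χ (-1) ^ 2 = 1 := quadraticChar_sq_one (neg_ne_zero.mpr one_ne_zero)
  calc ∑ a, χ a * χ (a - d) = ∑ x, χ (d * x) * χ (d * x - d) :=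
        (Fintype.sum_equiv (Equiv.mulLeft₀ d hd) _ _ fun _ => rfl).symm
    _ = ∑ x, χ (-1) * (χ x * χ⁻¹ (1 - x)) := by
        refine Fintype.sum_congr _ _ fun x => ?_
        rw [hχ_inv, show d * x - d = d * (-1) * (1 - x) by ring, map_mul, map_mul, map_mul]
        linear_combination χ (-1) * χ x * χ (1 - x) * quadraticChar_sq_one hd
    _ = χ (-1) * jacobiSum χ χ⁻¹ := by rw [jacobiSum, Finset.mul_sum]
    _ = -1 := by
        rw [jacobiSum_nontrivial_inv (quadraticChar_ne_one hF)]
        linear_combination -hχ_neg_one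

theorem quadraticChar_sum_mul_sub (hF : ringChar F ≠ 2) (d : F) :
    ∑ a : F, quadraticChar F a * quadraticChar F (a - d) =
      if d = 0 then (Fintype.card F : ℤ) - 1 else -1 := by
  split_ifs with hd
  · have hsq : ∀ a : F, quadraticChar F a * quadraticChar F a = 1 - if a = 0 then 1 else 0 := by
      intro a
      split_ifs with ha
      · simp [ha]
      · rw [← sq, quadraticChar_sq_one ha, sub_zero]
    rw [hd, Finset.sum_congr rfl fun a _ => by rw [sub_zero, hsq a], Finset.sum_sub_distrib]
    simp
  · exact quadraticChar_sum_mul_sub_of_ne_zero hF hd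

end QuadraticChar

theorem of_one_mul_of_one {n R : Type*} [Fintype n] [NonAssocSemiring R] :
    (of 1 : Matrix n n R) * of 1 = (Fintype.card n : R) • of 1 := by
  ext
  simp [mul_apply]

def jacobsthalMatrix (F R : Type*) [Field F] [Fintype F] [DecidableEq F] [Ring R] :
    Matrix F F R :=
  of fun x y => (quadraticChar F (x - y) : R)

section JacobsthalMatrix

variable {F R : Type*} [Field F] [Fintype F] [DecidableEq F] [Ring R]

theorem jacobsthalMatrix_transpose (h : IsSquare (-1 : F)) :
    (jacobsthalMatrix F R)ᵀ = jacobsthalMatrix F R := by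
  have hχ : quadraticChar F (-1) = 1 :=
    (quadraticChar_one_iff_isSquare (neg_ne_zero.mpr one_ne_zero)).mpr h
  ext x y
  rw [transpose_apply, jacobsthalMatrix, of_apply, of_apply, ← neg_sub, neg_eq_neg_one_mul,
    map_mul, hχ, one_mul]

theorem jacobsthalMatrix_conjTranspose [StarRing R] :
    (jacobsthalMatrix F R)ᴴ = (jacobsthalMatrix F R)ᵀ := by
  ext
  simp [jacobsthalMatrix]

theorem jacobsthalMatrix_mul_of_one (hF : ringChar F ≠ 2) :
    jacobsthalMatrix F R * of 1 = 0 := by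
  ext x
  have h := Fintype.sum_equiv (Equiv.subLeft x) (fun y => quadraticChar F (x - y)) _ fun _ => rfl
  simp only [jacobsthalMatrix, mul_apply, of_apply, Pi.one_apply, mul_one, ← Int.cast_sum, h,
    quadraticChar_sum_zero hF, Int.cast_zero, Matrix.zero_apply]

theorem of_one_mul_jacobsthalMatrix (hF : ringChar F ≠ 2) :
    of 1 * jacobsthalMatrix F R = 0 := by
  ext _ y
  have h := Fintype.sum_equiv (Equiv.subRight y) (fun x => quadraticChar F (x - y)) _ fun _ => rfl
  simp only [jacobsthalMatrix, mul_apply, of_apply, Pi.one_apply, one_mul, ← Int.cast_sum, h,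
    quadraticChar_sum_zero hF, Int.cast_zero, Matrix.zero_apply]

theorem jacobsthalMatrix_mul_transpose (hF : ringChar F ≠ 2) :
    jacobsthalMatrix F R * (jacobsthalMatrix F R)ᵀ = (Fintype.card F : R) • 1 - of 1 := by
  ext x y
  have h := Fintype.sum_equiv (Equiv.subLeft x)
    (fun z => quadraticChar F (x - z) * quadraticChar F (y - z))
    (fun a => quadraticChar F a * quadraticChar F (a - (x - y))) fun z => by simp
  have := quadraticChar_sum_mul_sub hF (x - y)
  simp only [mul_apply, transpose_apply, jacobsthalMatrix, of_apply, ← Int.cast_mul,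
    ← Int.cast_sum, h, this, sub_eq_zero, Matrix.sub_apply, Matrix.smul_apply, one_apply,
    Pi.one_apply]
  split_ifs <;> simp

end JacobsthalMatrix

def quadraticResidueMatrix (F : Type*) [Field F] [Fintype F] [DecidableEq F] (c : ℂ) :
    Matrix F F ℂ :=
  of fun x y => if x = y then 1 else if ∃ w : F, w ^ 2 = x - y then c else (starRingEnd ℂ) c

section QuadraticResidueMatrix

variable {F : Type*} [Field F] [Fintype F] [DecidableEq F]

theorem ite_exists_sq_eq_re_add_quadraticChar {a : F} (ha : a ≠ 0) (c : ℂ) :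
    (if ∃ w : F, w ^ 2 = a then c else (starRingEnd ℂ) c) =
      c.re + c.im * Complex.I * quadraticChar F a := by
  have hsq : (∃ w : F, w ^ 2 = a) ↔ IsSquare a := by
    simp only [isSquare_iff_exists_sq, eq_comm]
  split_ifs with h
  · rw [(quadraticChar_one_iff_isSquare ha).mpr (hsq.mp h), Int.cast_one, mul_one,
      Complex.re_add_im]
  · rw [quadraticChar_neg_one_iff_not_isSquare.mpr (hsq.not.mp h)]
    apply Complex.ext <;> simp

theorem quadraticResidueMatrix_eq (c : ℂ) :
    quadraticResidueMatrix F c =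
      (c.re : ℂ) • of 1 + (1 - c.re : ℂ) • 1 + (c.im * Complex.I) • jacobsthalMatrix F ℂ := by
  ext x y
  by_cases hxy : x = y
  · simp [quadraticResidueMatrix, jacobsthalMatrix, hxy]
  · simp [quadraticResidueMatrix, jacobsthalMatrix, hxy,
      ite_exists_sq_eq_re_add_quadraticChar (sub_ne_zero.mpr hxy)]

theorem quadraticResidueMatrix_conjTranspose (h : IsSquare (-1 : F)) (c : ℂ) :
    (quadraticResidueMatrix F c)ᴴ =
      (c.re : ℂ) • of 1 + (1 - c.re : ℂ) • 1 - (c.im * Complex.I) • jacobsthalMatrix F ℂ := by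
  have hJ : (of 1 : Matrix F F ℂ)ᴴ = of 1 := by
    ext
    simp
  have hconj : (starRingEnd ℂ) (c.im * Complex.I) = -(c.im * Complex.I) := by simp
  rw [quadraticResidueMatrix_eq, conjTranspose_add, conjTranspose_add, conjTranspose_smul,
    conjTranspose_smul, conjTranspose_smul, conjTranspose_one, hJ, jacobsthalMatrix_conjTranspose,
    jacobsthalMatrix_transpose h, star_sub, star_one, Complex.star_def, Complex.conj_ofReal, hconj,
    neg_smul, ← sub_eq_add_neg]

theorem isCHadamard_quadraticResidueMatrix (hF : Fintype.card F % 4 = 1) {c : ℂ} (hc : ‖c‖ = 1)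
    (hre : (Fintype.card F - 1) * c.re ^ 2 + 2 * c.re = 1) :
    IsCHadamard (quadraticResidueMatrix F c) := by
  have hchar : ringChar F ≠ 2 := fun h => by
    have := FiniteField.even_card_iff_char_two.mp h
    omega
  have hneg : IsSquare (-1 : F) := FiniteField.isSquare_neg_one_iff.mpr (by omega)
  have hQQ : jacobsthalMatrix F ℂ * jacobsthalMatrix F ℂ = (Fintype.card F : ℂ) • 1 - of 1 := by
    nth_rw 2 [← jacobsthalMatrix_transpose hneg]
    exact jacobsthalMatrix_mul_transpose hchar
  have hnorm : (c.re : ℂ) ^ 2 + (c.im : ℂ) ^ 2 = 1 := by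
    have h := Complex.sq_norm c
    rw [hc, Complex.normSq_apply] at h
    exact_mod_cast (by linear_combination -h : c.re ^ 2 + c.im ^ 2 = 1)
  have hre' : ((Fintype.card F : ℂ) - 1) * (c.re : ℂ) ^ 2 + 2 * c.re = 1 := by exact_mod_cast hre
  have hI : (c.im * Complex.I) ^ 2 = -(c.im : ℂ) ^ 2 := by simp [mul_pow]
  refine ⟨fun x y => ?_, ?_⟩
  · simp only [quadraticResidueMatrix, of_apply]
    split_ifs <;> simp [hc]
  rw [quadraticResidueMatrix_conjTranspose hneg, quadraticResidueMatrix_eq]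
  simp only [add_mul, mul_add, mul_sub, smul_mul_assoc, mul_smul_comm, one_mul, mul_one, hQQ,
    jacobsthalMatrix_mul_of_one hchar, of_one_mul_jacobsthalMatrix hchar, of_one_mul_of_one,
    smul_zero]
  linear_combination (norm := module) (hre' - hnorm + hI) • (of 1 : Matrix F F ℂ) +
    (Fintype.card F * hnorm - hre' - Fintype.card F * hI) • (1 : Matrix F F ℂ)

end QuadraticResidueMatrix

theorem stmt18 (F : Type) [Field F] [Fintype F] [DecidableEq F]
    (hcard : Fintype.card F = 9)
    (c : ℂ) (hc : c = 1/4 + Complex.I * (Real.sqrt 15 / 4)) :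
    IsCHadamard (Matrix.of fun x y : F =>
      if x = y then (1 : ℂ)
      else if ∃ w : F, w ^ 2 = x - y then c else (starRingEnd ℂ) c) := by
  have hre : c.re = 1 / 4 := by simp [hc]
  have him : c.im = √15 / 4 := by simp [hc]
  refine isCHadamard_quadraticResidueMatrix (by rw [hcard]) ?_ (by rw [hcard, hre]; norm_num)
  rw [Complex.norm_def, Complex.normSq_apply, hre, him, ← Real.sqrt_one]
  congr 1
  linear_combination Real.mul_self_sqrt (by norm_num : (0 : ℝ) ≤ 15) / 16
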